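/- Under the uniform measure on separable permutations of [n], conditionally on the first indecomposable block having length less than n, the probability that it has length j converges as n → ∞ to 2(3 − 2√2) for j = 1 and s_j (3 − 2√2)^j for j ≥ 2. -/

import Mathlib

/-!
Splitting a separable permutation `σ` of `[n]` after its first block of length `j < n` writes it
as the direct sum of an indecomposable separable permutation of `[j]` and an arbitrary separable
permutation of `[n - j]`, and for `n ≥ 2` the complement `i ↦ n - 1 - σ i` exchanges the
indecomposable and the decomposable ones. With `iₙ` the number of indecomposable ones this gives
`sₙ = 2 iₙ`, so the conditional probability is `iⱼ s_{n-j} / iₙ = 2 iⱼ s_{n-j} / sₙ`, where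
`2 i₁ = 2` and `2 iⱼ = sⱼ` for `j ≥ 2`.

The same decomposition gives `sₙ = s_{n-1} + ∑ sⱼ s_{n-j}`, so `F = ∑ sₙ Xⁿ` satisfies
`F² + (X - 1) F + X = 0`. Differentiating yields `(n + 2) s_{n+2} = (6n + 3) s_{n+1} - (n - 1) sₙ`,
from which the bounds `μ n / (n - 1) ≤ sₙ / s_{n+1} ≤ μ n / (n - 2)` with `μ = 3 - 2√2` (the root
of `μ² - 6μ + 1` below `1/5`) propagate by induction from `n = 3`. Hence `s_{n-j} / sₙ → μʲ`.
-/

open Equiv Finset Filter Topology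

/-- Direct sum of permutations: `(σ⊕τ)(i)=σ(i)` for `i<k`, `(σ⊕τ)(k+i)=k+τ(i)`. -/
def directSum {k l : ℕ} (σ : Equiv.Perm (Fin k)) (τ : Equiv.Perm (Fin l)) :
    Equiv.Perm (Fin (k + l)) :=
  finSumFinEquiv.symm.trans ((Equiv.sumCongr σ τ).trans finSumFinEquiv)

/-- Skew sum of permutations: `(σ⊖τ)(i)=σ(i)+l` for `i<k`, `(σ⊖τ)(k+i)=τ(i)`. -/
def skewSum {k l : ℕ} (σ : Equiv.Perm (Fin k)) (τ : Equiv.Perm (Fin l)) :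
    Equiv.Perm (Fin (k + l)) :=
  finSumFinEquiv.symm.trans ((Equiv.sumCongr σ τ).trans
    ((Equiv.sumComm (Fin k) (Fin l)).trans (finSumFinEquiv.trans (finCongr (Nat.add_comm l k)))))

/-- A permutation is separable if it is the singleton or a direct or skew sum of
two separable permutations. -/
inductive Separable : {n : ℕ} → Equiv.Perm (Fin n) → Prop where
  | single : Separable (Equiv.refl (Fin 1))
  | dsum {k l : ℕ} {σ : Equiv.Perm (Fin k)} {τ : Equiv.Perm (Fin l)} :
      Separable σ → Separable τ → Separable (directSum σ τ)
  | ssum {k l : ℕ} {σ : Equiv.Perm (Fin k)} {τ : Equiv.Perm (Fin l)} :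
      Separable σ → Separable τ → Separable (skewSum σ τ)

/-- `numSep n` = number of separable permutations of `[n]` (denoted `s_n`). -/
noncomputable def numSep (n : ℕ) : ℕ := Nat.card {σ : Equiv.Perm (Fin n) // Separable σ}

/-- The length `|B₁^{+,n}|(σ)` of the first indecomposable block of `σ`:
the least `j ≥ 1` with `σ([j]) = [j]`. -/
noncomputable def firstBlockLen {n : ℕ} (σ : Equiv.Perm (Fin n)) : ℕ :=
  sInf {j : ℕ | 0 < j ∧ ∀ i : Fin n, (i : ℕ) < j → ((σ i : ℕ) < j)}

def natApply {n : ℕ} (σ : Perm (Fin n)) (v : ℕ) : ℕ := if h : v < n then σ ⟨v, h⟩ else v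

section NatApply

variable {n : ℕ} (σ : Perm (Fin n))

lemma natApply_of_lt {v : ℕ} (h : v < n) : natApply σ v = σ ⟨v, h⟩ :=
  dif_pos h

lemma natApply_of_ge {v : ℕ} (h : n ≤ v) : natApply σ v = v :=
  dif_neg (Nat.not_lt.2 h)

@[simp]
lemma natApply_val (i : Fin n) : natApply σ i = σ i :=
  natApply_of_lt σ i.isLt

lemma natApply_lt_iff {v : ℕ} : natApply σ v < n ↔ v < n := by
  by_cases h : v < n
  · simp [natApply_of_lt σ h, h]
  · simp [natApply_of_ge σ (Nat.le_of_not_lt h), h]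

lemma natApply_injective : Function.Injective (natApply σ) := by
  intro v w hvw
  have hlt : v < n ↔ w < n := by rw [← natApply_lt_iff σ, hvw, natApply_lt_iff]
  by_cases hv : v < n
  · rw [natApply_of_lt σ hv, natApply_of_lt σ (hlt.1 hv)] at hvw
    simpa using σ.injective (Fin.ext hvw)
  · rwa [natApply_of_ge σ (Nat.le_of_not_lt hv),
      natApply_of_ge σ (Nat.le_of_not_lt (hlt.not.1 hv))] at hvw

variable {σ} in
lemma ext_natApply {τ : Perm (Fin n)} (h : ∀ v < n, natApply σ v = natApply τ v) : σ = τ :=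
  Equiv.ext fun i => Fin.ext (by simpa using h i i.isLt)

end NatApply

section SumsOnNat

variable {k l : ℕ} (σ : Perm (Fin k)) (τ : Perm (Fin l)) {v : ℕ}

lemma natApply_directSum_of_lt (hv : v < k) : natApply (directSum σ τ) v = natApply σ v := by
  rw [natApply_of_lt _ (by omega), natApply_of_lt _ hv,
    show (⟨v, _⟩ : Fin (k + l)) = Fin.castAdd l ⟨v, hv⟩ from rfl]
  simp only [directSum, trans_apply, finSumFinEquiv_symm_apply_castAdd]
  simp

lemma natApply_directSum_of_ge (hv : k ≤ v) :
    natApply (directSum σ τ) v = k + natApply τ (v - k) := by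
  rcases lt_or_ge v (k + l) with h | h
  · rw [natApply_of_lt _ h, natApply_of_lt _ (by omega),
      show (⟨v, h⟩ : Fin (k + l)) = Fin.natAdd k ⟨v - k, by omega⟩ from Fin.ext (by simp; omega)]
    simp only [directSum, trans_apply, finSumFinEquiv_symm_apply_natAdd]
    simp
  · rw [natApply_of_ge _ h, natApply_of_ge _ (by omega)]
    omega

lemma natApply_skewSum_of_lt (hv : v < k) : natApply (skewSum σ τ) v = natApply σ v + l := by
  rw [natApply_of_lt _ (by omega), natApply_of_lt _ hv,
    show (⟨v, _⟩ : Fin (k + l)) = Fin.castAdd l ⟨v, hv⟩ from rfl]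
  simp only [skewSum, trans_apply, finSumFinEquiv_symm_apply_castAdd]
  simp

lemma natApply_skewSum_of_ge (hv : k ≤ v) (hvl : v < k + l) :
    natApply (skewSum σ τ) v = natApply τ (v - k) := by
  rw [natApply_of_lt _ hvl, natApply_of_lt _ (by omega),
    show (⟨v, hvl⟩ : Fin (k + l)) = Fin.natAdd k ⟨v - k, by omega⟩ from Fin.ext (by simp; omega)]
  simp only [skewSum, trans_apply, finSumFinEquiv_symm_apply_natAdd]
  simp

end SumsOnNat

/-! ### Splitting a permutation after a prefix -/

def DirectSplitAt {n : ℕ} (σ : Perm (Fin n)) (k : ℕ) : Prop :=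
  ∀ i : Fin n, (i : ℕ) < k → (σ i : ℕ) < k

section DirectSplit

variable {n k : ℕ} {σ : Perm (Fin n)}

lemma directSplitAt_iff_natApply : DirectSplitAt σ k ↔ ∀ v < k, natApply σ v < k := by
  refine ⟨fun h v hv => ?_, fun h i hi => by simpa using h i hi⟩
  rcases lt_or_ge v n with hvn | hvn
  · simpa [natApply_of_lt σ hvn] using h ⟨v, hvn⟩ hv
  · rwa [natApply_of_ge σ hvn]

lemma directSplitAt_congr {m : ℕ} {τ : Perm (Fin m)} (h : ∀ v < k, natApply σ v = natApply τ v) :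
    DirectSplitAt σ k ↔ DirectSplitAt τ k := by
  simp +contextual only [directSplitAt_iff_natApply, h]

lemma directSplitAt_self (σ : Perm (Fin n)) : DirectSplitAt σ n := fun i _ => (σ i).isLt

lemma DirectSplitAt.le_natApply (h : DirectSplitAt σ k) {v : ℕ} (hv : k ≤ v) :
    k ≤ natApply σ v := by
  -- `natApply σ` is injective and maps the finite set `[0, k)` into itself, hence onto it.
  by_contra! hlt
  have hbij := ((Set.finite_Iio k).injOn_iff_bijOn_of_mapsTo (directSplitAt_iff_natApply.1 h)).1
    (natApply_injective σ).injOn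
  obtain ⟨w, hw, hwv⟩ := hbij.surjOn (show natApply σ v ∈ Set.Iio k from hlt)
  have hwk : w < k := hw
  exact absurd (natApply_injective σ hwv) (by omega)

end DirectSplit

namespace DirectSplitAt

variable {n k : ℕ} {σ : Perm (Fin n)} (h : DirectSplitAt σ k)

noncomputable def leftPerm : Perm (Fin k) :=
  Equiv.ofBijective (fun i => ⟨natApply σ i, directSplitAt_iff_natApply.1 h i i.isLt⟩)
    (Finite.injective_iff_bijective.1 fun _ _ hij =>
      Fin.ext (natApply_injective σ (Fin.mk.inj hij)))

noncomputable def rightPerm {l : ℕ} (hkl : k + l = n) : Perm (Fin l) :=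
  Equiv.ofBijective
    (fun i => ⟨natApply σ (k + i) - k, by
      have := (natApply_lt_iff σ).2 (show k + i < n by omega); have := i.isLt; omega⟩)
    (Finite.injective_iff_bijective.1 fun i j hij => by
      have hi := h.le_natApply (Nat.le_add_right k i)
      have hj := h.le_natApply (Nat.le_add_right k j)
      have := natApply_injective σ (show natApply σ (k + i) = natApply σ (k + j) by
        simp only [Fin.mk.injEq] at hij; omega)
      exact Fin.ext (by omega))

lemma natApply_leftPerm {v : ℕ} (hv : v < k) : natApply h.leftPerm v = natApply σ v := by
  rw [natApply_of_lt _ hv]; rfl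

lemma natApply_rightPerm {l : ℕ} (hkl : k + l = n) {v : ℕ} (hv : v < l) :
    natApply (h.rightPerm hkl) v = natApply σ (k + v) - k := by
  rw [natApply_of_lt _ hv]; rfl

lemma leftPerm_congr {m : ℕ} {τ : Perm (Fin m)} (h' : DirectSplitAt τ k)
    (heq : ∀ v < k, natApply σ v = natApply τ v) : h.leftPerm = h'.leftPerm :=
  ext_natApply fun v hv => by rw [natApply_leftPerm _ hv, natApply_leftPerm _ hv, heq v hv]

lemma leftPerm_self (h : DirectSplitAt σ n) : h.leftPerm = σ :=
  ext_natApply fun _ hv => natApply_leftPerm h hv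

lemma rightPerm_zero (h : DirectSplitAt σ 0) (hkl : 0 + n = n) : h.rightPerm hkl = σ :=
  ext_natApply fun v hv => by rw [natApply_rightPerm _ _ hv, Nat.zero_add, Nat.sub_zero]

lemma directSum_leftPerm_rightPerm {l : ℕ} {σ : Perm (Fin (k + l))} (h : DirectSplitAt σ k) :
    directSum h.leftPerm (h.rightPerm rfl) = σ := by
  refine ext_natApply fun v hv => ?_
  rcases lt_or_ge v k with hvk | hvk
  · rw [natApply_directSum_of_lt _ _ hvk, natApply_leftPerm _ hvk]
  · rw [natApply_directSum_of_ge _ _ hvk, natApply_rightPerm _ _ (by omega),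
      Nat.add_sub_cancel' hvk]
    have := h.le_natApply hvk
    omega

end DirectSplitAt

section DirectSumSplit

variable {a b k : ℕ} (σ : Perm (Fin a)) (τ : Perm (Fin b))

lemma directSplitAt_directSum_iff_of_le (hk : k ≤ a) :
    DirectSplitAt (directSum σ τ) k ↔ DirectSplitAt σ k :=
  directSplitAt_congr fun _ hv => natApply_directSum_of_lt σ τ (by omega)

lemma directSplitAt_directSum_add_iff {c : ℕ} :
    DirectSplitAt (directSum σ τ) (a + c) ↔ DirectSplitAt τ c := by
  simp only [directSplitAt_iff_natApply]
  refine ⟨fun h v hv => ?_, fun h v hv => ?_⟩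
  · have := h (a + v) (by omega)
    rw [natApply_directSum_of_ge σ τ (by omega), Nat.add_sub_cancel_left] at this
    omega
  · rcases lt_or_ge v a with hva | hva
    · rw [natApply_directSum_of_lt σ τ hva]
      have := (natApply_lt_iff σ).2 hva
      omega
    · rw [natApply_directSum_of_ge σ τ hva]
      have := h (v - a) (by omega)
      omega

lemma directSplitAt_directSum : DirectSplitAt (directSum σ τ) a :=
  (directSplitAt_directSum_iff_of_le σ τ le_rfl).2 (directSplitAt_self σ)

variable {σ τ}

lemma DirectSplitAt.leftPerm_directSum_of_le (h : DirectSplitAt (directSum σ τ) k) (hk : k ≤ a) :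
    h.leftPerm = ((directSplitAt_directSum_iff_of_le σ τ hk).1 h).leftPerm :=
  h.leftPerm_congr _ fun _ hv => natApply_directSum_of_lt σ τ (by omega)

lemma DirectSplitAt.leftPerm_directSum_add {c : ℕ} (h : DirectSplitAt (directSum σ τ) (a + c)) :
    h.leftPerm = directSum σ ((directSplitAt_directSum_add_iff σ τ).1 h).leftPerm := by
  refine ext_natApply fun v hv => ?_
  rw [natApply_leftPerm _ hv]
  rcases lt_or_ge v a with hva | hva
  · rw [natApply_directSum_of_lt _ _ hva, natApply_directSum_of_lt _ _ hva]
  · rw [natApply_directSum_of_ge _ _ hva, natApply_directSum_of_ge _ _ hva,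
      natApply_leftPerm _ (by omega)]

lemma DirectSplitAt.rightPerm_directSum_of_le (h : DirectSplitAt (directSum σ τ) k) (hk : k ≤ a)
    (hkl : k + (a - k + b) = a + b) :
    h.rightPerm hkl =
      directSum (((directSplitAt_directSum_iff_of_le σ τ hk).1 h).rightPerm
        (Nat.add_sub_cancel' hk)) τ := by
  refine ext_natApply fun v hv => ?_
  rw [natApply_rightPerm _ _ hv]
  rcases lt_or_ge v (a - k) with hva | hva
  · rw [natApply_directSum_of_lt _ _ (by omega), natApply_directSum_of_lt _ _ hva,
      natApply_rightPerm _ _ hva]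
  · rw [natApply_directSum_of_ge _ _ (by omega), natApply_directSum_of_ge _ _ hva,
      show k + v - a = v - (a - k) by omega]
    omega

lemma DirectSplitAt.rightPerm_directSum_add {c l : ℕ} (h : DirectSplitAt (directSum σ τ) (a + c))
    (hkl : a + c + l = a + b) :
    h.rightPerm hkl = ((directSplitAt_directSum_add_iff σ τ).1 h).rightPerm (by omega) := by
  refine ext_natApply fun v hv => ?_
  rw [natApply_rightPerm _ _ hv, natApply_rightPerm _ _ hv,
    natApply_directSum_of_ge _ _ (by omega), show a + c + v - a = c + v by omega]
  omega

end DirectSumSplit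

def complement {n : ℕ} (σ : Perm (Fin n)) : Perm (Fin n) := σ.trans Fin.revPerm

section Complement

variable {n : ℕ} (σ : Perm (Fin n))

lemma natApply_complement {v : ℕ} (hv : v < n) :
    natApply (complement σ) v = n - 1 - natApply σ v := by
  simp [natApply_of_lt _ hv, complement, Fin.val_rev]
  omega

@[simp]
lemma complement_complement : complement (complement σ) = σ := by
  ext i; simp [complement]

lemma complement_involutive : Function.Involutive (complement (n := n)) :=
  complement_complement

variable {k l : ℕ} (σ : Perm (Fin k)) (τ : Perm (Fin l))

lemma complement_directSum :
    complement (directSum σ τ) = skewSum (complement σ) (complement τ) := by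
  refine ext_natApply fun v hv => ?_
  rw [natApply_complement _ hv]
  rcases lt_or_ge v k with hvk | hvk
  · rw [natApply_directSum_of_lt _ _ hvk, natApply_skewSum_of_lt _ _ hvk,
      natApply_complement _ hvk]
    have := (natApply_lt_iff σ).2 hvk
    omega
  · rw [natApply_directSum_of_ge _ _ hvk, natApply_skewSum_of_ge _ _ hvk hv,
      natApply_complement _ (by omega)]
    have := (natApply_lt_iff τ).2 (show v - k < l by omega)
    omega

lemma complement_skewSum :
    complement (skewSum σ τ) = directSum (complement σ) (complement τ) := by
  rw [← complement_complement (directSum _ _), complement_directSum, complement_complement,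
    complement_complement]

end Complement

lemma Separable.pos {n : ℕ} {σ : Perm (Fin n)} (h : Separable σ) : 0 < n := by
  induction h <;> omega

lemma Separable.complement {n : ℕ} {σ : Perm (Fin n)} (h : Separable σ) :
    Separable (_root_.complement σ) := by
  induction h with
  | single => rw [Subsingleton.elim (_root_.complement _) (Equiv.refl (Fin 1))]; exact .single
  | dsum _ _ ih₁ ih₂ => exact complement_directSum _ _ ▸ .ssum ih₁ ih₂
  | ssum _ _ ih₁ ih₂ => exact complement_skewSum _ _ ▸ .dsum ih₁ ih₂

lemma separable_complement_iff {n : ℕ} {σ : Perm (Fin n)} :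
    Separable (complement σ) ↔ Separable σ :=
  ⟨fun h => complement_complement σ ▸ h.complement, Separable.complement⟩

/-- A proper direct split puts `σ 0` below `σ (n - 1)`, a proper skew split the other way round. -/
lemma not_directSplitAt_and_complement {n k m : ℕ} {σ : Perm (Fin n)}
    (hk : 0 < k) (hkn : k < n) (hm : 0 < m) (hmn : m < n)
    (hσ : DirectSplitAt σ k) (hσ' : DirectSplitAt (complement σ) m) : False := by
  have h₁ := directSplitAt_iff_natApply.1 hσ 0 hk
  have h₂ := directSplitAt_iff_natApply.1 hσ' 0 hm
  have h₃ := hσ.le_natApply (show k ≤ n - 1 by omega)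
  have h₄ := hσ'.le_natApply (show m ≤ n - 1 by omega)
  rw [natApply_complement _ (by omega)] at h₂ h₄
  omega

lemma Separable.exists_directSplitAt {n : ℕ} {σ : Perm (Fin n)} (h : Separable σ) (hn : 2 ≤ n) :
    ∃ k, 0 < k ∧ k < n ∧ (DirectSplitAt σ k ∨ DirectSplitAt (_root_.complement σ) k) := by
  cases h with
  | single => omega
  | dsum h₁ h₂ => exact ⟨_, h₁.pos, by have := h₂.pos; omega, .inl (directSplitAt_directSum _ _)⟩
  | ssum h₁ h₂ =>
    refine ⟨_, h₁.pos, by have := h₂.pos; omega, .inr ?_⟩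
    rw [complement_skewSum]
    exact directSplitAt_directSum _ _

lemma not_directSplitAt_skewSum {a b k : ℕ} (σ : Perm (Fin a)) (τ : Perm (Fin b))
    (ha : 0 < a) (hb : 0 < b) (hk : 0 < k) (hkn : k < a + b) :
    ¬ DirectSplitAt (skewSum σ τ) k := fun h =>
  not_directSplitAt_and_complement hk hkn ha (by omega) h
    (complement_skewSum σ τ ▸ directSplitAt_directSum _ _)

lemma Separable.leftPerm {n k : ℕ} {σ : Perm (Fin n)} (hσ : Separable σ) (h : DirectSplitAt σ k)
    (hk : 0 < k) (hkn : k ≤ n) : Separable h.leftPerm := by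
  induction hσ generalizing k with
  | single =>
    obtain rfl : k = 1 := by omega
    rw [h.leftPerm_self]; exact .single
  | @dsum a b σ τ hσ hτ ihσ ihτ =>
    rcases le_or_gt k a with hka | hka
    · rw [h.leftPerm_directSum_of_le hka]; exact ihσ _ hk hka
    · obtain ⟨c, rfl⟩ := Nat.exists_eq_add_of_le hka.le
      rw [h.leftPerm_directSum_add]; exact .dsum hσ (ihτ _ (by omega) (by omega))
  | @ssum a b σ τ hσ hτ =>
    obtain rfl : k = a + b := by
      by_contra hne; exact not_directSplitAt_skewSum σ τ hσ.pos hτ.pos hk (by omega) h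
    rw [h.leftPerm_self]; exact .ssum hσ hτ

lemma Separable.rightPerm {n k l : ℕ} {σ : Perm (Fin n)} (hσ : Separable σ)
    (h : DirectSplitAt σ k) (hkl : k + l = n) (hl : 0 < l) : Separable (h.rightPerm hkl) := by
  induction hσ generalizing k l with
  | single =>
    obtain ⟨rfl, rfl⟩ : k = 0 ∧ l = 1 := by omega
    rw [h.rightPerm_zero]; exact .single
  | @dsum a b σ τ hσ hτ ihσ ihτ =>
    rcases lt_or_ge k a with hka | hka
    · obtain rfl : l = a - k + b := by omega
      rw [h.rightPerm_directSum_of_le hka.le]; exact .dsum (ihσ _ _ (by omega)) hτ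
    · obtain ⟨c, rfl⟩ := Nat.exists_eq_add_of_le hka
      rw [h.rightPerm_directSum_add]; exact ihτ _ _ hl
  | @ssum a b σ τ hσ hτ =>
    obtain ⟨rfl, rfl⟩ : k = 0 ∧ l = a + b := by
      by_contra hne
      exact not_directSplitAt_skewSum σ τ hσ.pos hτ.pos (k := k) (by omega) (by omega) h
    rw [h.rightPerm_zero]; exact .ssum hσ hτ

/-! ### The first block and counting -/

section FirstBlockLen

variable {n : ℕ} {σ : Perm (Fin n)}

lemma firstBlockLen_le {k : ℕ} (hk : 0 < k) (h : DirectSplitAt σ k) : firstBlockLen σ ≤ k :=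
  Nat.sInf_le ⟨hk, h⟩

lemma firstBlockLen_le_self (hn : 0 < n) : firstBlockLen σ ≤ n :=
  firstBlockLen_le hn (directSplitAt_self σ)

lemma DirectSplitAt.firstBlockLen_spec {k : ℕ} (h : DirectSplitAt σ k) (hk : 0 < k) :
    0 < firstBlockLen σ ∧ DirectSplitAt σ (firstBlockLen σ) :=
  Nat.sInf_mem (s := {j | 0 < j ∧ DirectSplitAt σ j}) ⟨k, hk, h⟩

lemma firstBlockLen_pos (hn : 0 < n) : 0 < firstBlockLen σ :=
  ((directSplitAt_self σ).firstBlockLen_spec hn).1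

lemma directSplitAt_of_firstBlockLen_eq {j : ℕ} (hn : 0 < n) (hj : firstBlockLen σ = j) :
    DirectSplitAt σ j :=
  hj ▸ ((directSplitAt_self σ).firstBlockLen_spec hn).2

lemma DirectSplitAt.directSplitAt_leftPerm_iff {k m : ℕ} (h : DirectSplitAt σ k) (hm : m ≤ k) :
    DirectSplitAt h.leftPerm m ↔ DirectSplitAt σ m :=
  directSplitAt_congr fun _ hv => h.natApply_leftPerm (by omega)

lemma DirectSplitAt.firstBlockLen_leftPerm {k : ℕ} (h : DirectSplitAt σ k) (hk : 0 < k) :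
    firstBlockLen h.leftPerm = firstBlockLen σ := by
  obtain ⟨hpos, hsplit⟩ := h.firstBlockLen_spec hk
  obtain ⟨hpos', hsplit'⟩ := (directSplitAt_self h.leftPerm).firstBlockLen_spec hk
  have hle := firstBlockLen_le hk h
  have hle' := firstBlockLen_le_self (σ := h.leftPerm) hk
  exact le_antisymm (firstBlockLen_le hpos ((h.directSplitAt_leftPerm_iff hle).2 hsplit))
    (firstBlockLen_le hpos' ((h.directSplitAt_leftPerm_iff hle').1 hsplit'))

lemma Separable.firstBlockLen_complement_lt_iff (hσ : Separable σ) (hn : 2 ≤ n) :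
    firstBlockLen (_root_.complement σ) < n ↔ firstBlockLen σ = n := by
  constructor
  · intro hlt
    obtain ⟨hpos', hsplit'⟩ := (directSplitAt_self (_root_.complement σ)).firstBlockLen_spec
      (by omega)
    obtain ⟨hpos, hsplit⟩ := (directSplitAt_self σ).firstBlockLen_spec (by omega)
    by_contra hne
    have := firstBlockLen_le_self (σ := σ) (by omega)
    exact not_directSplitAt_and_complement hpos (by omega) hpos' hlt hsplit hsplit'
  · intro heq
    obtain ⟨k, hk, hkn, hsplit | hsplit⟩ := hσ.exists_directSplitAt hn
    · exact absurd (firstBlockLen_le hk hsplit) (by omega)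
    · exact (firstBlockLen_le hk hsplit).trans_lt hkn

end FirstBlockLen

lemma firstBlockLen_directSum {a b : ℕ} (σ : Perm (Fin a)) (τ : Perm (Fin b)) (ha : 0 < a) :
    firstBlockLen (directSum σ τ) = firstBlockLen σ := by
  have h := directSplitAt_directSum σ τ
  rw [← h.firstBlockLen_leftPerm ha, h.leftPerm_directSum_of_le le_rfl, DirectSplitAt.leftPerm_self]

lemma DirectSplitAt.leftPerm_directSum {a b : ℕ} {σ : Perm (Fin a)} {τ : Perm (Fin b)}
    (h : DirectSplitAt (directSum σ τ) a) : h.leftPerm = σ := by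
  rw [h.leftPerm_directSum_of_le le_rfl, DirectSplitAt.leftPerm_self]

lemma DirectSplitAt.rightPerm_directSum {a b : ℕ} {σ : Perm (Fin a)} {τ : Perm (Fin b)}
    (h : DirectSplitAt (directSum σ τ) a) : h.rightPerm rfl = τ :=
  (h.rightPerm_directSum_add (c := 0) _).trans (rightPerm_zero _ _)

noncomputable def numIndecSep (n : ℕ) : ℕ :=
  Nat.card {σ : Perm (Fin n) // Separable σ ∧ firstBlockLen σ = n}

noncomputable def firstBlockEquiv {j m : ℕ} (hj : 0 < j) (hm : 0 < m) :
    {σ : Perm (Fin (j + m)) // Separable σ ∧ firstBlockLen σ = j} ≃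
      {τ : Perm (Fin j) // Separable τ ∧ firstBlockLen τ = j} × {ρ : Perm (Fin m) // Separable ρ}
    where
  toFun σ :=
    have h : DirectSplitAt σ.1 j := directSplitAt_of_firstBlockLen_eq (by omega) σ.2.2
    ⟨⟨h.leftPerm, σ.2.1.leftPerm h hj (by omega), (h.firstBlockLen_leftPerm hj).trans σ.2.2⟩,
      ⟨h.rightPerm rfl, σ.2.1.rightPerm h rfl hm⟩⟩
  invFun p := ⟨directSum p.1.1 p.2.1, .dsum p.1.2.1 p.2.2,
    (firstBlockLen_directSum _ _ hj).trans p.1.2.2⟩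
  left_inv σ := Subtype.ext
    (directSplitAt_of_firstBlockLen_eq (by omega) σ.2.2).directSum_leftPerm_rightPerm
  right_inv p := Prod.ext
    (Subtype.ext (directSplitAt_directSum p.1.1 p.2.1).leftPerm_directSum)
    (Subtype.ext (directSplitAt_directSum p.1.1 p.2.1).rightPerm_directSum)

lemma card_subtype_eq_sum_card_fiberwise {α : Type*} [Fintype α] {P : α → Prop} {g : α → ℕ}
    {s : Finset ℕ} (h : ∀ a, P a → g a ∈ s) :
    Nat.card {a // P a} = ∑ j ∈ s, Nat.card {a // P a ∧ g a = j} := by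
  classical
  simp only [Nat.card_eq_fintype_card, Fintype.card_subtype]
  rw [Finset.card_eq_sum_card_fiberwise (f := g) (t := s) fun a ha => h a (by simpa using ha)]
  simp only [Finset.filter_filter]

section Counting

variable {n : ℕ}

lemma card_separable_firstBlockLen_eq {j : ℕ} (hj : 0 < j) (hjn : j < n) :
    Nat.card {σ : Perm (Fin n) // Separable σ ∧ firstBlockLen σ = j} =
      numIndecSep j * numSep (n - j) := by
  obtain ⟨m, rfl⟩ := Nat.exists_eq_add_of_le hjn.le
  rw [Nat.card_congr (firstBlockEquiv hj (by omega)), Nat.card_prod, Nat.add_sub_cancel_left]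
  rfl

lemma card_separable_firstBlockLen_lt (hn : 2 ≤ n) :
    Nat.card {σ : Perm (Fin n) // Separable σ ∧ firstBlockLen σ < n} = numIndecSep n :=
  Nat.card_congr <| (complement_involutive.toPerm _).subtypeEquiv fun σ => by
    rw [Function.Involutive.coe_toPerm, separable_complement_iff]
    exact and_congr_right fun hσ => by
      rw [← hσ.complement.firstBlockLen_complement_lt_iff hn, complement_complement]

lemma card_separable_firstBlockLen_lt_eq_sum_card :
    Nat.card {σ : Perm (Fin n) // Separable σ ∧ firstBlockLen σ < n} =
      ∑ j ∈ Finset.Ico 1 n, Nat.card {σ : Perm (Fin n) // Separable σ ∧ firstBlockLen σ = j} := by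
  rw [card_subtype_eq_sum_card_fiberwise (g := firstBlockLen) (s := Finset.Ico 1 n)
    fun σ hσ => Finset.mem_Ico.2 ⟨firstBlockLen_pos hσ.1.pos, hσ.2⟩]
  refine Finset.sum_congr rfl fun j hj => Nat.card_congr <| Equiv.subtypeEquivRight fun σ =>
    ⟨fun h => ⟨h.1.1, h.2⟩, fun h => ⟨⟨h.1, h.2 ▸ (Finset.mem_Ico.1 hj).2⟩, h.2⟩⟩

lemma card_separable_firstBlockLen_lt_eq_sum :
    Nat.card {σ : Perm (Fin n) // Separable σ ∧ firstBlockLen σ < n} =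
      ∑ j ∈ Finset.Ico 1 n, numIndecSep j * numSep (n - j) := by
  rw [card_separable_firstBlockLen_lt_eq_sum_card]
  exact Finset.sum_congr rfl fun j hj =>
    card_separable_firstBlockLen_eq (Finset.mem_Ico.1 hj).1 (Finset.mem_Ico.1 hj).2

lemma numSep_eq_numIndecSep_add (hn : 0 < n) :
    numSep n =
      numIndecSep n + Nat.card {σ : Perm (Fin n) // Separable σ ∧ firstBlockLen σ < n} := by
  rw [numSep, card_subtype_eq_sum_card_fiberwise (g := firstBlockLen) (s := Finset.Ico 1 (n + 1))
    fun σ hσ => Finset.mem_Ico.2 ⟨firstBlockLen_pos hσ.pos,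
      Nat.lt_succ_of_le (firstBlockLen_le_self hσ.pos)⟩,
    Finset.sum_Ico_succ_top hn, add_comm, card_separable_firstBlockLen_lt_eq_sum_card, numIndecSep]

end Counting

section Numbers

variable {n : ℕ}

lemma numSep_eq_two_mul_numIndecSep (hn : 2 ≤ n) : numSep n = 2 * numIndecSep n := by
  rw [numSep_eq_numIndecSep_add (by omega), card_separable_firstBlockLen_lt hn, two_mul]

lemma numIndecSep_eq_sum (hn : 2 ≤ n) :
    numIndecSep n = ∑ j ∈ Finset.Ico 1 n, numIndecSep j * numSep (n - j) := by
  rw [← card_separable_firstBlockLen_lt hn, card_separable_firstBlockLen_lt_eq_sum]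

lemma numSep_zero : numSep 0 = 0 :=
  have : IsEmpty {σ : Perm (Fin 0) // Separable σ} := ⟨fun σ => (σ.2.pos).false⟩
  Nat.card_of_isEmpty

lemma firstBlockLen_fin_one (σ : Perm (Fin 1)) : firstBlockLen σ = 1 :=
  le_antisymm (firstBlockLen_le_self one_pos) (firstBlockLen_pos one_pos)

lemma numSep_one : numSep 1 = 1 :=
  Nat.card_eq_one_iff_exists.2 ⟨⟨_, .single⟩, fun _ => Subtype.ext (Subsingleton.elim _ _)⟩

lemma numIndecSep_one : numIndecSep 1 = 1 :=
  Nat.card_eq_one_iff_exists.2 ⟨⟨_, .single, firstBlockLen_fin_one _⟩,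
    fun _ => Subtype.ext (Subsingleton.elim _ _)⟩

lemma two_mul_numIndecSep (hn : 0 < n) : 2 * numIndecSep n = numSep n + if n = 1 then 1 else 0 := by
  obtain rfl | hn := (show n = 1 ∨ 2 ≤ n by omega)
  · simp [numIndecSep_one, numSep_one]
  · rw [numSep_eq_two_mul_numIndecSep hn, if_neg (by omega), add_zero]

lemma numSep_eq_add_sum (hn : 2 ≤ n) :
    numSep n = numSep (n - 1) + ∑ j ∈ Finset.Ico 1 n, numSep j * numSep (n - j) := by
  rw [numSep_eq_two_mul_numIndecSep hn, numIndecSep_eq_sum hn, Finset.mul_sum]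
  rw [Finset.sum_congr rfl fun j hj => by
    rw [← mul_assoc, two_mul_numIndecSep (Finset.mem_Ico.1 hj).1]]
  simp only [add_mul, Finset.sum_add_distrib, ite_mul, one_mul, zero_mul, Finset.sum_ite_eq',
    Finset.mem_Ico, le_refl, true_and, if_pos (show 1 < n by omega)]
  ring

lemma exists_separable (hn : 0 < n) : ∃ σ : Perm (Fin n), Separable σ := by
  induction n, hn using Nat.le_induction with
  | base => exact ⟨_, .single⟩
  | succ m _ ih => obtain ⟨σ, hσ⟩ := ih; exact ⟨_, .dsum hσ .single⟩

lemma numSep_pos (hn : 0 < n) : 0 < numSep n :=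
  have ⟨σ, hσ⟩ := exists_separable hn
  have : Nonempty {σ : Perm (Fin n) // Separable σ} := ⟨⟨σ, hσ⟩⟩
  Nat.card_pos

lemma numSep_two : numSep 2 = 2 := by
  rw [numSep_eq_add_sum le_rfl]; simp [numSep_one]

lemma numSep_three : numSep 3 = 6 := by
  rw [numSep_eq_add_sum (by norm_num)]; simp [Finset.sum_Ico_succ_top, numSep_one, numSep_two]

lemma numSep_four : numSep 4 = 22 := by
  rw [numSep_eq_add_sum (by norm_num)]
  simp [Finset.sum_Ico_succ_top, numSep_one, numSep_two, numSep_three]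

end Numbers

/-! ### The generating function -/

section GeneratingFunction

open PowerSeries

noncomputable def numSepSeries : PowerSeries ℝ := PowerSeries.mk fun n => (numSep n : ℝ)

@[simp]
lemma coeff_numSepSeries (n : ℕ) : coeff n numSepSeries = numSep n :=
  coeff_mk _ _

lemma coeff_numSepSeries_sq (n : ℕ) :
    coeff n (numSepSeries ^ 2) = ∑ j ∈ Finset.Ico 1 n, (numSep j * numSep (n - j) : ℝ) := by
  rw [sq, coeff_mul, Finset.Nat.sum_antidiagonal_eq_sum_range_succ_mk]
  simp only [coeff_numSepSeries]
  rcases n.eq_zero_or_pos with rfl | hn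
  · simp [numSep_zero]
  rw [Finset.sum_range_succ, Nat.sub_self, Finset.range_eq_Ico,
    Finset.sum_eq_sum_Ico_succ_bot hn]
  simp [numSep_zero]

lemma numSepSeries_sq_add : numSepSeries ^ 2 + (X - 1) * numSepSeries + X = 0 := by
  ext n
  simp only [map_add, sub_mul, one_mul, map_sub, coeff_numSepSeries_sq, coeff_numSepSeries,
    map_zero]
  rcases n with _ | _ | m
  · simp [numSep_zero]
  · simp [numSep_zero, numSep_one]
  · rw [coeff_succ_X_mul, coeff_numSepSeries, coeff_X, if_neg (by omega),
      numSep_eq_add_sum (n := m + 2) (by omega)]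
    push_cast
    ring

lemma numSepSeries_ode :
    (1 - 6 * X + X * X) * d⁄dX ℝ numSepSeries = 1 + X + X * numSepSeries - 3 * numSepSeries := by
  -- `(2F + X - 1)² = 1 - 6X + X²` by the quadratic equation, which `(2F + X - 1) F' = -(F + 1)`
  -- (its derivative) turns into a linear equation for `F'`.
  have hderiv := congrArg (d⁄dX ℝ) numSepSeries_sq_add
  simp only [map_add, Derivation.leibniz, sq, map_sub, derivative_X, map_zero,
    smul_eq_mul, Derivation.map_one_eq_zero] at hderiv
  linear_combination (2 * numSepSeries + X - 1) * hderiv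
    - (4 * d⁄dX ℝ numSepSeries + 2) * numSepSeries_sq_add

lemma numSep_polynomial_recurrence (n : ℕ) (hn : 1 ≤ n) :
    (n + 2 : ℝ) * numSep (n + 2) = (6 * n + 3) * numSep (n + 1) - (n - 1) * numSep n := by
  obtain ⟨k, rfl⟩ := Nat.exists_eq_add_of_le' hn
  have h := congrArg (coeff (k + 2)) numSepSeries_ode
  rw [← map_ofNat C 6, ← map_ofNat C 3] at h
  simp only [sub_mul, add_mul, one_mul, mul_assoc, map_add, map_sub, coeff_succ_X_mul,
    coeff_C_mul, coeff_derivative, coeff_numSepSeries, coeff_one, coeff_X] at h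
  simp only [show k + 2 + 1 = k + 1 + 2 by ring, show k + 2 = k + 1 + 1 by ring] at h
  push_cast at h ⊢
  linear_combination h

end GeneratingFunction

/-! ### Ratio asymptotics -/

def RatioBounds (a : ℕ → ℝ) (μ : ℝ) (n : ℕ) : Prop :=
  μ * n * a (n + 1) ≤ (n - 1) * a n ∧ (n - 2) * a n ≤ μ * n * a (n + 1)

section RatioAsymptotics

variable {a : ℕ → ℝ} {μ : ℝ}

lemma RatioBounds.succ (hμ : μ ^ 2 = 6 * μ - 1) (hμ0 : 0 ≤ μ) (hμ5 : μ ≤ 1 / 5) {n : ℕ}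
    (hn : 3 ≤ n) (ha : 0 ≤ a (n + 1))
    (hrec : (n + 2) * a (n + 2) = (6 * n + 3) * a (n + 1) - (n - 1) * a n)
    (h : RatioBounds a μ n) : RatioBounds a μ (n + 1) := by
  obtain ⟨h₁, h₂⟩ := h
  have hn : (3 : ℝ) ≤ n := by exact_mod_cast hn
  unfold RatioBounds
  push_cast
  constructor
  · have hc : 0 ≤ μ * (n + 1) := by positivity
    have hpoly : 0 ≤ n - 3 * μ * (n + 1) := by nlinarith
    -- after substituting the recurrence, `μ² = 6μ - 1` cancels the terms quadratic in `μ`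
    have key : μ * (n + 1) * ((n + 2) * a (n + 2)) ≤ n * (n + 2) * a (n + 1) := by
      rw [hrec]
      linear_combination mul_le_mul_of_nonneg_left h₁ hc + mul_nonneg ha hpoly
        - (n * (n + 1) * a (n + 1)) * hμ
    nlinarith
  · have hc : 0 ≤ μ * (n + 1) * (n - 1) := mul_nonneg (by positivity) (by linarith)
    have hpoly : 0 ≤ (n + 4) * (n - 1) - 3 * μ * (n + 1) * (n + 2) := by
      nlinarith [mul_le_mul_of_nonneg_right hμ5 (by positivity : (0 : ℝ) ≤ (n + 1) * (n + 2))]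
    have key : 0 ≤ (n - 2) *
        (μ * (n + 1) * ((n + 2) * a (n + 2)) - (n - 1) * (n + 2) * a (n + 1)) := by
      rw [hrec]
      linear_combination mul_le_mul_of_nonneg_left h₂ hc + mul_nonneg ha hpoly
        + (n * (n + 1) * (n - 1) * a (n + 1)) * hμ
    have := (mul_nonneg_iff_of_pos_left (by linarith : (0 : ℝ) < n - 2)).1 key
    nlinarith

lemma tendsto_div_succ_of_ratioBounds (hpos : ∀ᶠ n in atTop, 0 < a (n + 1))
    (h : ∀ᶠ n in atTop, RatioBounds a μ n) :
    Tendsto (fun n => a n / a (n + 1)) atTop (𝓝 μ) := by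
  have hlim (c : ℝ) : Tendsto (fun n : ℕ => μ * (n / (n + c))) atTop (𝓝 μ) := by
    simpa using (tendsto_natCast_div_add_atTop c).const_mul μ
  refine tendsto_of_tendsto_of_tendsto_of_le_of_le' (hlim (-1)) (hlim (-2)) ?_ ?_ <;>
    filter_upwards [hpos, h, eventually_ge_atTop 3] with n hpos ⟨h₁, h₂⟩ hn <;>
    have hn : (3 : ℝ) ≤ n := by exact_mod_cast hn
  · rw [le_div_iff₀ hpos, ← sub_eq_add_neg, mul_div_assoc', div_mul_eq_mul_div,
      div_le_iff₀ (by linarith)]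
    linarith
  · rw [div_le_iff₀ hpos, ← sub_eq_add_neg, mul_div_assoc', div_mul_eq_mul_div,
      le_div_iff₀ (by linarith)]
    linarith

lemma tendsto_sub_div_of_tendsto_div_succ (hpos : ∀ᶠ n in atTop, a n ≠ 0)
    (h : Tendsto (fun n => a n / a (n + 1)) atTop (𝓝 μ)) (j : ℕ) :
    Tendsto (fun n => a (n - j) / a n) atTop (𝓝 (μ ^ j)) := by
  induction j with
  | zero =>
    rw [pow_zero]
    refine tendsto_const_nhds.congr' ?_
    filter_upwards [hpos] with n hn
    rw [Nat.sub_zero, div_self hn]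
  | succ j ih =>
    have hshift := h.comp (tendsto_sub_atTop_nat (j + 1))
    rw [pow_succ']
    refine (hshift.mul ih).congr' ?_
    filter_upwards [eventually_ge_atTop (j + 1),
      (tendsto_sub_atTop_nat j).eventually hpos] with n hn hne
    rw [Function.comp_apply, show n - (j + 1) + 1 = n - j by omega]
    field_simp

end RatioAsymptotics

lemma three_sub_two_sqrt_two_sq : (3 - 2 * √2) ^ 2 = 6 * (3 - 2 * √2) - 1 := by
  nlinarith [Real.sq_sqrt (show (0 : ℝ) ≤ 2 by norm_num)]

lemma tendsto_numSep_div_succ :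
    Tendsto (fun n => (numSep n : ℝ) / numSep (n + 1)) atTop (𝓝 (3 - 2 * √2)) := by
  have h2 := Real.sq_sqrt (show (0 : ℝ) ≤ 2 by norm_num)
  have hlo : (1.41 : ℝ) ≤ √2 := Real.le_sqrt_of_sq_le (by norm_num)
  have hhi : √2 ≤ 1.42 := Real.sqrt_le_iff.2 ⟨by norm_num, by norm_num⟩
  have hbase : RatioBounds (fun n => numSep n) (3 - 2 * √2) 3 := by
    simp only [RatioBounds, Nat.reduceAdd, numSep_three, numSep_four]
    constructor <;> push_cast <;> nlinarith
  refine tendsto_div_succ_of_ratioBounds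
    (Eventually.of_forall fun n => by exact_mod_cast numSep_pos n.succ_pos) ?_
  filter_upwards [eventually_ge_atTop 3] with n hn
  induction n, hn using Nat.le_induction with
  | base => exact hbase
  | succ n hn ih =>
    refine ih.succ three_sub_two_sqrt_two_sq (by linarith) (by linarith) hn
      (Nat.cast_nonneg _) ?_
    exact_mod_cast numSep_polynomial_recurrence n (by omega)

/-- Under the uniform measure on separable permutations of `[n]`, conditioned on the first
indecomposable block having length `< n`, the probability that it has length `j` converges
as `n → ∞` to `2(3-2√2)` if `j = 1` and to `s_j (3-2√2)^j` if `j ≥ 2`. -/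
theorem firstBlockLen_conditional_limit (j : ℕ) (hj : 1 ≤ j) :
    Filter.Tendsto
      (fun n : ℕ =>
        (Nat.card {σ : Equiv.Perm (Fin n) //
            Separable σ ∧ firstBlockLen σ = j ∧ firstBlockLen σ < n} : ℝ) /
        (Nat.card {σ : Equiv.Perm (Fin n) // Separable σ ∧ firstBlockLen σ < n} : ℝ))
      Filter.atTop
      (nhds (if j = 1 then 2 * (3 - 2 * Real.sqrt 2)
             else (numSep j : ℝ) * (3 - 2 * Real.sqrt 2) ^ j)) := by
  have hlimit : (if j = 1 then 2 * (3 - 2 * √2) else (numSep j : ℝ) * (3 - 2 * √2) ^ j) =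
      (2 * numIndecSep j : ℕ) * (3 - 2 * √2) ^ j := by
    rw [two_mul_numIndecSep hj]
    split_ifs with h
    · subst h; norm_num [numSep_one]
    · simp
  have hpos : ∀ᶠ n in atTop, (numSep n : ℝ) ≠ 0 :=
    (eventually_ge_atTop 1).mono fun n hn => by exact_mod_cast (numSep_pos hn).ne'
  rw [hlimit]
  refine ((tendsto_sub_div_of_tendsto_div_succ hpos tendsto_numSep_div_succ j).const_mul
    ((2 * numIndecSep j : ℕ) : ℝ)).congr' ?_
  filter_upwards [eventually_gt_atTop j, eventually_ge_atTop 2] with n hjn hn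
  have hnum : Nat.card {σ : Perm (Fin n) // Separable σ ∧ firstBlockLen σ = j ∧
      firstBlockLen σ < n} = numIndecSep j * numSep (n - j) := by
    rw [← card_separable_firstBlockLen_eq hj hjn]
    exact Nat.card_congr <| Equiv.subtypeEquivRight fun σ =>
      ⟨fun h => ⟨h.1, h.2.1⟩, fun h => ⟨h.1, h.2, h.2 ▸ hjn⟩⟩
  rw [hnum, card_separable_firstBlockLen_lt hn, numSep_eq_two_mul_numIndecSep hn]
  push_cast
  field_simp
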